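/- arXiv:2011.11225 — 5 statements merged into one kernel-verified Lean document; each statement's English description precedes it below -/
import Mathlib

section
/- For every prime p and integer n ≥ 1, any Kakeya set S ⊆ F_p^n satisfies |S| ≥ binom(p+n-2, n-1). -/
/-!
Dvir's polynomial method. If `|S| < binom(p+n-2, n-1)`, the number of monomials of degree `p - 1`
in `n` variables, some nonzero homogeneous `g` of degree `p - 1` vanishes on `S`. On a line
`t ↦ a + t b` inside `S`, `g(a + t b)` is a polynomial of degree `< p` with `p` roots, hence zero;
by homogeneity its `t^(p-1)` coefficient is `g(b)`. So `g` vanishes on all of `F_p^n`, which a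
nonzero homogeneous polynomial of degree `< p` cannot do.
-/

namespace Polynomial
variable {R ι : Type*}

theorem coeff_prod_sum_of_natDegree_le [CommSemiring R] (s : Finset ι)
    (f : ι → R[X]) (e : ι → ℕ) (h : ∀ i ∈ s, (f i).natDegree ≤ e i) :
    (∏ i ∈ s, f i).coeff (∑ i ∈ s, e i) = ∏ i ∈ s, (f i).coeff (e i) := by
  classical
  induction s using Finset.induction_on with
  | empty => simp
  | insert j s hj ih =>
    have hs : ∀ i ∈ s, (f i).natDegree ≤ e i := fun i hi => h i (Finset.mem_insert_of_mem hi)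
    rw [Finset.prod_insert hj, Finset.sum_insert hj, Finset.prod_insert hj,
      coeff_mul_add_eq_of_natDegree_le (h j (Finset.mem_insert_self j s))
        ((natDegree_prod_le _ _).trans (Finset.sum_le_sum hs)), ih hs]

variable [CommRing R]

theorem natDegree_linear_pow_le (a b : R) (m : ℕ) : ((C b * X + C a) ^ m).natDegree ≤ m := by
  simpa using natDegree_pow_le_of_le m (natDegree_linear_le (a := b) (b := a))

theorem coeff_linear_pow_self (a b : R) (m : ℕ) : ((C b * X + C a) ^ m).coeff m = b ^ m := by
  simpa using coeff_pow_of_natDegree_le (m := m) (natDegree_linear_le (a := b) (b := a))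

theorem natDegree_prod_linear_pow_le (s : Finset ι) (a b : ι → R) (e : ι → ℕ) :
    (∏ i ∈ s, (C (b i) * X + C (a i)) ^ e i).natDegree ≤ ∑ i ∈ s, e i :=
  (natDegree_prod_le _ _).trans (Finset.sum_le_sum fun _ _ => natDegree_linear_pow_le _ _ _)

theorem coeff_prod_linear_pow (s : Finset ι) (a b : ι → R) (e : ι → ℕ) :
    (∏ i ∈ s, (C (b i) * X + C (a i)) ^ e i).coeff (∑ i ∈ s, e i) =
      ∏ i ∈ s, b i ^ e i := by
  rw [coeff_prod_sum_of_natDegree_le _ _ _ fun _ _ => natDegree_linear_pow_le _ _ _]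
  exact Finset.prod_congr rfl fun _ _ => coeff_linear_pow_self _ _ _

end Polynomial

namespace MvPolynomial

theorem finrank_homogeneousSubmodule (σ K : Type*) [Fintype σ] [Field K] (d : ℕ) :
    Module.finrank K (homogeneousSubmodule σ K d) = (Fintype.card σ + d - 1).choose d := by
  classical
  have e : {s : σ →₀ ℕ | s.degree = d} ≃ Sym σ d :=
    (Equiv.subtypeEquivRight fun _ => Iff.rfl).trans (Sym.equivNatSum σ d).symm
  rw [homogeneousSubmodule_eq_finsupp_supported,
    ((AddMonoidAlgebra.supportedEquivFinsupp _).trans (Finsupp.domLCongr e)).finrank_eq,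
    Module.finrank_finsupp_self, Sym.card_sym_eq_choose]

theorem exists_isHomogeneous_ne_zero_forall_mem_eval_eq_zero {σ K : Type*} [Fintype σ] [Field K]
    (S : Finset (σ → K)) {d : ℕ} (hS : S.card < (Fintype.card σ + d - 1).choose d) :
    ∃ g : MvPolynomial σ K, g ≠ 0 ∧ g.IsHomogeneous d ∧ ∀ x ∈ S, eval x g = 0 := by
  have : FiniteDimensional K (homogeneousSubmodule σ K d) :=
    Module.Finite.iff_fg.mpr (homogeneousSubmodule_fg σ K d)
  let evalOnS : homogeneousSubmodule σ K d →ₗ[K] (S → K) :=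
    LinearMap.pi fun x => (aeval x.1).toLinearMap ∘ₗ (homogeneousSubmodule σ K d).subtype
  have hker : LinearMap.ker evalOnS ≠ ⊥ := LinearMap.ker_ne_bot_of_finrank_lt <| by
    rwa [Module.finrank_fintype_fun_eq_card, Fintype.card_coe, finrank_homogeneousSubmodule]
  obtain ⟨⟨g, hg⟩, hgker, hg0⟩ := Submodule.ne_bot_iff _ |>.mp hker
  refine ⟨g, fun h => hg0 (Subtype.ext h), hg, fun x hx => ?_⟩
  exact congrFun (LinearMap.mem_ker.mp hgker) ⟨x, hx⟩

section Line
variable {σ R : Type*} [CommRing R]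

noncomputable def restrictToLine (a b : σ → R) : MvPolynomial σ R →ₐ[R] Polynomial R :=
  aeval fun i => Polynomial.C (b i) * Polynomial.X + Polynomial.C (a i)

theorem eval_restrictToLine (a b : σ → R) (g : MvPolynomial σ R) (t : R) :
    (restrictToLine a b g).eval t = eval (a + t • b) g := by
  rw [← Polynomial.coe_aeval_eq_eval, restrictToLine, ← AlgHom.comp_apply, comp_aeval,
    aeval_eq_eval₂Hom, coe_eval₂Hom]
  congr 1
  funext i
  simp only [Polynomial.coe_aeval_eq_eval, Polynomial.eval_add, Polynomial.eval_mul,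
    Polynomial.eval_C, Polynomial.eval_X, Pi.add_apply, Pi.smul_apply, smul_eq_mul]
  ring

theorem restrictToLine_eq_sum (a b : σ → R) (g : MvPolynomial σ R) :
    restrictToLine a b g = ∑ s ∈ g.support, Polynomial.C (coeff s g) *
      ∏ i ∈ s.support, (Polynomial.C (b i) * Polynomial.X + Polynomial.C (a i)) ^ s i := by
  rw [restrictToLine, aeval_eq_eval₂Hom, coe_eval₂Hom, eval₂_eq, Polynomial.algebraMap_eq]

variable {g : MvPolynomial σ R} {d : ℕ}

theorem IsHomogeneous.natDegree_restrictToLine_le (hg : g.IsHomogeneous d) (a b : σ → R) :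
    (restrictToLine a b g).natDegree ≤ d := by
  rw [restrictToLine_eq_sum]
  refine Polynomial.natDegree_sum_le_of_forall_le _ _ fun s hs => ?_
  rw [hg.degree_eq_sum_deg_support hs]
  exact Polynomial.natDegree_C_mul_le _ _ |>.trans (Polynomial.natDegree_prod_linear_pow_le _ _ _ _)

theorem IsHomogeneous.coeff_restrictToLine (hg : g.IsHomogeneous d) (a b : σ → R) :
    (restrictToLine a b g).coeff d = eval b g := by
  rw [restrictToLine_eq_sum, Polynomial.finsetSum_coeff, eval_eq]
  refine Finset.sum_congr rfl fun s hs => ?_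
  rw [Polynomial.coeff_C_mul, hg.degree_eq_sum_deg_support hs, Polynomial.coeff_prod_linear_pow]

theorem IsHomogeneous.eval_eq_zero_of_forall_eval_line_eq_zero [IsDomain R] [Fintype R]
    (hg : g.IsHomogeneous d) (hd : d < Fintype.card R) {a b : σ → R}
    (hline : ∀ t : R, eval (a + t • b) g = 0) : eval b g = 0 := by
  have h : restrictToLine a b g = 0 :=
    Polynomial.eq_zero_of_natDegree_lt_card_of_eval_eq_zero _ Function.injective_id
      (fun t => (eval_restrictToLine a b g t).trans (hline t))
      ((hg.natDegree_restrictToLine_le a b).trans_lt hd)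
  rw [← hg.coeff_restrictToLine a b, h, Polynomial.coeff_zero]

end Line

end MvPolynomial

open MvPolynomial

def IsKakeya {σ F : Type*} [Field F] (S : Set (σ → F)) : Prop :=
  ∀ b : σ → F, b ≠ 0 → ∃ a : σ → F, ∀ t : F, a + t • b ∈ S

namespace IsKakeya
variable {σ F : Type*} [Field F] [Fintype F]

theorem eq_zero_of_isHomogeneous {S : Set (σ → F)} (hS : IsKakeya S) {g : MvPolynomial σ F}
    {d : ℕ} (hg : g.IsHomogeneous d) (hd0 : d ≠ 0) (hdF : d < Fintype.card F)
    (hgS : ∀ x ∈ S, eval x g = 0) : g = 0 := by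
  refine hg.eq_zero_of_forall_eval_eq_zero_of_le_card (fun b => ?_) ?_
  · by_cases hb : b = 0
    · rw [hb, eval_zero]
      exact hg.coeff_eq_zero (by simpa using hd0.symm)
    · obtain ⟨a, ha⟩ := hS b hb
      exact hg.eval_eq_zero_of_forall_eval_line_eq_zero hdF fun t => hgS _ (ha t)
  · rw [Cardinal.mk_fintype]
    exact_mod_cast hdF.le

theorem choose_le_card [Fintype σ] {S : Finset (σ → F)} (hS : IsKakeya (S : Set (σ → F))) :
    (Fintype.card σ + Fintype.card F - 2).choose (Fintype.card F - 1) ≤ S.card := by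
  have hF : 1 < Fintype.card F := Fintype.one_lt_card
  by_contra! hlt
  have hd : Fintype.card σ + (Fintype.card F - 1) - 1 = Fintype.card σ + Fintype.card F - 2 := by
    omega
  obtain ⟨g, hg0, hg, hgS⟩ :=
    exists_isHomogeneous_ne_zero_forall_mem_eval_eq_zero S (d := Fintype.card F - 1) (hd ▸ hlt)
  exact hg0 (hS.eq_zero_of_isHomogeneous hg (by omega) (by omega) hgS)

end IsKakeya

/-- Every Kakeya set in `F_p^n` has size at least `binom(p+n-2, n-1)`. -/
theorem kakeya_card_ge_choose
    {p n : ℕ} [Fact p.Prime] (hn : 1 ≤ n) (S : Finset (Fin n → ZMod p))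
    (hS : ∀ b : Fin n → ZMod p, b ≠ 0 →
      ∃ a : Fin n → ZMod p, ∀ t : ZMod p, a + t • b ∈ S) :
    Nat.choose (p + n - 2) (n - 1) ≤ S.card := by
  have hp : 2 ≤ p := (Fact.out : p.Prime).two_le
  calc (p + n - 2).choose (n - 1) = (n + p - 2).choose (p - 1) := by
        rw [add_comm p n, Nat.choose_symm_of_eq_add]
        omega
    _ ≤ S.card := by simpa using IsKakeya.choose_le_card (S := S) hS
end

section
/- Let N be a square-free positive integer and let S ⊆ (Z/NZ)^n be a Kakeya set. Then the t-fold Cartesian product S^t ⊆ (Z/NZ)^{tn} is also a Kakeya set. -/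
/-- A direction in `(Z/NZ)^ι`: a vector whose reduction modulo every prime factor of `N`
is non-zero. -/
def IsDirection {N : ℕ} {ι : Type*} (b : ι → ZMod N) : Prop :=
  ∀ (q : ℕ), q.Prime → ∀ (h : q ∣ N), (fun i => ZMod.castHom h (ZMod q) (b i)) ≠ 0

/-- A Kakeya set in `(Z/NZ)^ι`: contains a line in every direction. -/
def IsKakeyaSet {N : ℕ} {ι : Type*} (S : Set (ι → ZMod N)) : Prop :=
  ∀ b : ι → ZMod N, IsDirection b →
    ∃ a : ι → ZMod N, ∀ t : ZMod N, a + t • b ∈ S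

/-!
For square-free `N`, a Kakeya set contains a line `s ↦ a + s • v` for every vector `v`, direction
or not, as soon as some direction exists: by the Chinese remainder theorem choose `c` congruent to
`v` modulo the primes `q ∣ N` at which `v` does not vanish and to a direction modulo the others,
and `s'` congruent to `s`, resp. `0`; then `c` is a direction and `s • v = s' • c`. Applied to
each block of a direction of the product, this gives a line in the product set.
-/

namespace ZMod

noncomputable def equivPiPrimeFactors {N : ℕ} (hN : Squarefree N) :
    ZMod N ≃+* Π q : N.primeFactors, ZMod (q : ℕ) :=
  (ringEquivCongr ((Finset.prod_coe_sort N.primeFactors _).trans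
      (Nat.prod_primeFactors_of_squarefree hN)).symm).trans
    (prodEquivPi _ fun i j hij =>
      (Nat.coprime_primes (Nat.prime_of_mem_primeFactors i.2)
        (Nat.prime_of_mem_primeFactors j.2)).mpr fun h => hij (Subtype.ext h))

theorem equivPiPrimeFactors_apply {N : ℕ} (hN : Squarefree N) (x : ZMod N)
    (q : N.primeFactors) :
    equivPiPrimeFactors hN x q = castHom (Nat.dvd_of_mem_primeFactors q.2) (ZMod q) x :=
  RingHom.congr_fun (RingHom.ext_zmod
    ((Pi.evalRingHom _ q).comp (equivPiPrimeFactors hN).toRingHom) (castHom _ _)) x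

end ZMod

section Kakeya

variable {N : ℕ} {ι : Type*}

theorem IsDirection.isDirection_one {κ : Type*} {b : κ → ZMod N} (hb : IsDirection b)
    (f : κ → ι) : IsDirection (1 : ι → ZMod N) := by
  intro q hq hqN h1
  have := Fact.mk hq
  refine hb q hq hqN <| funext fun k => (one_ne_zero (α := ZMod q) ?_).elim
  simpa only [Pi.one_apply, Pi.zero_apply, map_one] using congrFun h1 (f k)

theorem exists_isDirection_forall_smul_eq (hN : Squarefree N) {d : ι → ZMod N}
    (hd : IsDirection d) (v : ι → ZMod N) :
    ∃ c : ι → ZMod N, IsDirection c ∧ ∀ s : ZMod N, ∃ s' : ZMod N, s • v = s' • c := by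
  classical
  let φ := ZMod.equivPiPrimeFactors hN
  let c : ι → ZMod N := fun i =>
    φ.symm fun q => if (fun j => φ (v j) q) = 0 then φ (d i) q else φ (v i) q
  refine ⟨c, fun q hq hqN hc => ?_, fun s =>
    ⟨φ.symm fun q => if (fun j => φ (v j) q) = 0 then 0 else φ s q, ?_⟩⟩
  · let q' : N.primeFactors := ⟨q, Nat.mem_primeFactors.mpr ⟨hq, hqN, hN.ne_zero⟩⟩
    have hc' (i : ι) : φ (c i) q' = 0 := by
      rw [ZMod.equivPiPrimeFactors_apply]; exact congrFun hc i
    by_cases hv : (fun j => φ (v j) q') = 0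
    · refine hd q hq hqN <| funext fun i => ?_
      have := hc' i
      rwa [RingEquiv.apply_symm_apply, if_pos hv, ZMod.equivPiPrimeFactors_apply] at this
    · refine hv <| funext fun i => ?_
      have := hc' i
      rwa [RingEquiv.apply_symm_apply, if_neg hv] at this
  · funext i
    refine φ.injective <| funext fun q => ?_
    simp only [c, Pi.smul_apply, smul_eq_mul, map_mul, Pi.mul_apply, RingEquiv.apply_symm_apply]
    split_ifs with hv
    · simp [show φ (v i) q = 0 from congrFun hv i]
    · rfl

theorem IsKakeyaSet.exists_forall_add_smul_mem {S : Set (ι → ZMod N)} (hS : IsKakeyaSet S)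
    (hN : Squarefree N) {d : ι → ZMod N} (hd : IsDirection d) (v : ι → ZMod N) :
    ∃ a : ι → ZMod N, ∀ s : ZMod N, a + s • v ∈ S := by
  obtain ⟨c, hc, hvc⟩ := exists_isDirection_forall_smul_eq hN hd v
  obtain ⟨a, ha⟩ := hS c hc
  refine ⟨a, fun s => ?_⟩
  obtain ⟨s', hs'⟩ := hvc s
  simpa only [hs'] using ha s'

end Kakeya

/-- For square-free `N`, the `t`-fold product of a Kakeya set in `(Z/NZ)^n`
is a Kakeya set in `(Z/NZ)^{tn}`. -/
theorem isKakeyaSet_product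
    {N : ℕ} (hN : Squarefree N) {n t : ℕ} (S : Set (Fin n → ZMod N))
    (hS : IsKakeyaSet S) :
    IsKakeyaSet {f : Fin t × Fin n → ZMod N |
      ∀ j : Fin t, (fun i : Fin n => f (j, i)) ∈ S} := by
  intro b hb
  choose a ha using fun j : Fin t =>
    hS.exists_forall_add_smul_mem hN (hb.isDirection_one Prod.snd) fun i => b (j, i)
  exact ⟨fun p => a p.1 p.2, fun s j => ha j s⟩
end

section
/- (Schwartz–Zippel with multiplicities) Let F be a field, f ∈ F[x_1, ..., x_n] a nonzero polynomial of degree at most d, and U ⊆ F a finite set. Then ∑_{a ∈ U^n} mult(f, a) ≤ d · |U|^{n−1}. -/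
open MvPolynomial

/-- The shift of `f` by `a`: the polynomial `z ↦ f(z + a)`. Its coefficients are
exactly the Hasse derivatives of `f` evaluated at `a`. -/
noncomputable def polyShift {F : Type*} [CommRing F] {n : ℕ}
    (f : MvPolynomial (Fin n) F) (a : Fin n → F) : MvPolynomial (Fin n) F :=
  MvPolynomial.bind₁ (fun i => MvPolynomial.X i + MvPolynomial.C (a i)) f

/-- The multiplicity of `f` at `a`: the largest `m` such that every Hasse derivative of
`f` of weight less than `m` vanishes at `a`. -/
noncomputable def polyMult {F : Type*} [CommRing F] {n : ℕ}
    (f : MvPolynomial (Fin n) F) (a : Fin n → F) : ℕ :=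
  sSup {m : ℕ | ∀ d : Fin n →₀ ℕ, (d.sum fun _ e => e) < m →
    MvPolynomial.coeff d (polyShift f a) = 0}

/-!
Induction on the number of variables. Write `f = ∑_{k ≤ t} f_k(x') x₀^k` with `f_t ≠ 0`, so
that `deg f_t + t ≤ deg f`. Given `a`, pick a monomial `x'^i` with `|i| = mult(f_t, a)` whose
coefficient in `f_t(x' + a)` is nonzero. The coefficient `g(x₀)` of `x'^i` in `f(x₀, x' + a)` is
then a nonzero univariate polynomial of degree `t`, and the coefficient of `x₀^r x'^i` in
`f(x + (b, a))` is the `r`-th Taylor coefficient of `g` at `b`; taking `r = mult_b(g)` gives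
`mult(f, (b, a)) ≤ mult(f_t, a) + mult_b(g)`. Since `∑_{b ∈ U} mult_b(g) ≤ t`, summing over
`(b, a) ∈ U × U^n` and applying induction to `f_t` gives
`|U| · deg f_t · |U|^(n-1) + t · |U|^n ≤ deg f · |U|^n`.
-/

open Finset

theorem Polynomial.sum_rootMultiplicity_le_natDegree {R : Type*} [CommRing R] [IsDomain R]
    (p : Polynomial R) (U : Finset R) : ∑ b ∈ U, p.rootMultiplicity b ≤ p.natDegree := by
  classical
  calc ∑ b ∈ U, p.rootMultiplicity b = ∑ b ∈ U, p.roots.count b := by simp only [count_roots]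
    _ ≤ ∑ b ∈ U ∪ p.roots.toFinset, p.roots.count b := sum_le_sum_of_subset subset_union_left
    _ = Multiset.card p.roots :=
        Multiset.sum_count_eq_card fun _ hb => mem_union_right _ (Multiset.mem_toFinset.2 hb)
    _ ≤ p.natDegree := p.card_roots'

theorem Finsupp.degree_cons {n : ℕ} (y : ℕ) (s : Fin n →₀ ℕ) :
    (Finsupp.cons y s).degree = y + s.degree := by
  simp [Finsupp.degree_eq_sum, Fin.sum_univ_succ]

theorem Fintype.sum_piFinset_const_succ {α M : Type*} [AddCommMonoid M] {n : ℕ} (U : Finset α)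
    (g : (Fin (n + 1) → α) → M) :
    ∑ x ∈ Fintype.piFinset (fun _ : Fin (n + 1) => U), g x =
      ∑ b ∈ U, ∑ a ∈ Fintype.piFinset (fun _ : Fin n => U), g (Fin.cons b a) := by
  have := Finset.filter_piFinset_eq_map_consEquiv (fun _ : Fin (n + 1) => U) (fun _ => True)
  simp only [filter_true] at this
  rw [this, sum_map, sum_product]
  rfl

section CoeffSlice

variable {R σ : Type*} [CommSemiring R]

noncomputable def Polynomial.coeffSlice (i : σ →₀ ℕ) (Q : Polynomial (MvPolynomial σ R)) :
    Polynomial R :=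
  Q.sum fun k c => monomial k (c.coeff i)

namespace Polynomial

@[simp]
theorem coeff_coeffSlice (i : σ →₀ ℕ) (Q : Polynomial (MvPolynomial σ R)) (k : ℕ) :
    (coeffSlice i Q).coeff k = (Q.coeff k).coeff i := by
  simp +contextual [coeffSlice, Polynomial.sum_def, coeff_monomial]

theorem coeffSlice_monomial (i : σ →₀ ℕ) (k : ℕ) (c : MvPolynomial σ R) :
    coeffSlice i (monomial k c) = monomial k (c.coeff i) := by
  ext; simp [coeff_monomial, apply_ite (MvPolynomial.coeff i)]

theorem coeffSlice_add (i : σ →₀ ℕ) (P Q : Polynomial (MvPolynomial σ R)) :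
    coeffSlice i (P + Q) = coeffSlice i P + coeffSlice i Q := by
  ext; simp

theorem coeffSlice_C_mul_map_C (i : σ →₀ ℕ) (c : MvPolynomial σ R) (p : Polynomial R) :
    coeffSlice i (C c * p.map MvPolynomial.C) = c.coeff i • p := by
  ext; simp [coeff_C_mul, mul_comm c, MvPolynomial.coeff_C_mul, mul_comm (p.coeff _)]

theorem coeffSlice_taylor (i : σ →₀ ℕ) (b : R) (Q : Polynomial (MvPolynomial σ R)) :
    coeffSlice i (taylor (MvPolynomial.C b) Q) = taylor b (coeffSlice i Q) := by
  induction Q using Polynomial.induction_on' with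
  | add P Q hP hQ => rw [map_add, coeffSlice_add, hP, hQ, coeffSlice_add, map_add]
  | monomial k c =>
    have hpow : (X + C (MvPolynomial.C b : MvPolynomial σ R)) ^ k =
        ((X + C b) ^ k).map MvPolynomial.C := by simp
    rw [taylor_monomial, hpow, coeffSlice_C_mul_map_C, coeffSlice_monomial, taylor_monomial,
      smul_eq_C_mul]

end Polynomial

end CoeffSlice

section PolyShift

variable {R : Type*} [CommRing R] {n : ℕ}

theorem polyShift_polyShift (f : MvPolynomial (Fin n) R) (a b : Fin n → R) :
    polyShift (polyShift f a) b = polyShift f (a + b) := by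
  simp only [polyShift, bind₁_bind₁, map_add, bind₁_X_right, bind₁_C_right, Pi.add_apply,
    add_assoc, add_comm (C (b _))]

theorem polyShift_zero (f : MvPolynomial (Fin n) R) : polyShift f 0 = f := by
  simp [polyShift, bind₁_X_left]

theorem polyShift_injective (a : Fin n → R) :
    Function.Injective fun f : MvPolynomial (Fin n) R => polyShift f a := fun f g h => by
  simpa [polyShift_polyShift, polyShift_zero] using congrArg (polyShift · (-a)) h

theorem polyShift_ne_zero {f : MvPolynomial (Fin n) R} (hf : f ≠ 0) (a : Fin n → R) :
    polyShift f a ≠ 0 :=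
  (polyShift_injective a).ne_iff' (map_zero _) |>.2 hf

noncomputable def polyShiftAlgHom (a : Fin n → R) :
    MvPolynomial (Fin n) R →ₐ[R] MvPolynomial (Fin n) R :=
  bind₁ fun i => X i + C (a i)

theorem polyShiftAlgHom_apply (a : Fin n → R) (f : MvPolynomial (Fin n) R) :
    polyShiftAlgHom a f = polyShift f a := rfl

/-- `f (x₀, x + a)`, as a polynomial in `x₀`. -/
noncomputable def shiftTail (f : MvPolynomial (Fin (n + 1)) R) (a : Fin n → R) :
    Polynomial (MvPolynomial (Fin n) R) :=
  (finSuccEquiv R n f).map (polyShiftAlgHom a)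

theorem coeff_shiftTail (f : MvPolynomial (Fin (n + 1)) R) (a : Fin n → R) (k : ℕ) :
    (shiftTail f a).coeff k = polyShiftAlgHom a ((finSuccEquiv R n f).coeff k) :=
  Polynomial.coeff_map _ _

theorem finSuccEquiv_polyShift_cons (f : MvPolynomial (Fin (n + 1)) R) (b : R) (a : Fin n → R) :
    finSuccEquiv R n (polyShift f (Fin.cons b a)) =
      Polynomial.taylor (C b) (shiftTail f a) := by
  suffices (finSuccEquiv R n).toAlgHom.comp (polyShiftAlgHom (Fin.cons b a)) =
      ((Polynomial.taylorAlgHom (C b : MvPolynomial (Fin n) R)).restrictScalars R).comp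
        ((Polynomial.mapAlgHom (polyShiftAlgHom a)).comp (finSuccEquiv R n).toAlgHom) from
    congrArg (· f) this
  refine MvPolynomial.algHom_ext fun j => ?_
  cases j using Fin.cases <;> simp [polyShiftAlgHom, finSuccEquiv_apply, Polynomial.taylor_X]

end PolyShift

section PolyMult

variable {R : Type*} [CommRing R] {n : ℕ}

theorem polyMult_le_degree {f : MvPolynomial (Fin n) R} {a : Fin n → R} {d : Fin n →₀ ℕ}
    (h : coeff d (polyShift f a) ≠ 0) : polyMult f a ≤ d.degree :=
  csSup_le ⟨0, fun _ h0 => absurd h0 (Nat.not_lt_zero _)⟩ fun _ hm =>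
    not_lt.1 fun hlt => h (hm d hlt)

theorem exists_degree_eq_polyMult {f : MvPolynomial (Fin n) R} (hf : f ≠ 0) (a : Fin n → R) :
    ∃ d : Fin n →₀ ℕ, d.degree = polyMult f a ∧ coeff d (polyShift f a) ≠ 0 := by
  obtain ⟨d₀, hd₀⟩ := ne_zero_iff.1 (polyShift_ne_zero hf a)
  have hbdd : BddAbove {m : ℕ | ∀ d : Fin n →₀ ℕ, (d.sum fun _ e => e) < m →
      coeff d (polyShift f a) = 0} :=
    ⟨d₀.degree, fun _ hm => not_lt.1 fun hlt => hd₀ (hm d₀ hlt)⟩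
  have hnot : polyMult f a + 1 ∉ {m : ℕ | ∀ d : Fin n →₀ ℕ, (d.sum fun _ e => e) < m →
      coeff d (polyShift f a) = 0} := fun hmem => (le_csSup hbdd hmem).not_gt (Nat.lt_succ_self _)
  simp only [Set.mem_ofPred_eq, not_forall] at hnot
  obtain ⟨d, hlt, hd⟩ := hnot
  exact ⟨d, le_antisymm (Nat.lt_succ_iff.1 hlt) (polyMult_le_degree hd), hd⟩

theorem polyMult_fin_zero {f : MvPolynomial (Fin 0) R} (hf : f ≠ 0) (a : Fin 0 → R) :
    polyMult f a = 0 := by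
  obtain ⟨d, hd, -⟩ := exists_degree_eq_polyMult hf a
  rw [← hd, Subsingleton.elim d 0, map_zero]

end PolyMult

section Slicing

open Polynomial

variable {R : Type*} [CommRing R] {n : ℕ}

theorem coeff_cons_polyShift_cons (f : MvPolynomial (Fin (n + 1)) R) (b : R) (a : Fin n → R)
    (r : ℕ) (i : Fin n →₀ ℕ) :
    MvPolynomial.coeff (Finsupp.cons r i) (polyShift f (Fin.cons b a)) =
      (taylor b (coeffSlice i (shiftTail f a))).coeff r := by
  rw [← finSuccEquiv_coeff_coeff, finSuccEquiv_polyShift_cons, ← coeffSlice_taylor,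
    coeff_coeffSlice]

theorem polyMult_cons_le_add_rootMultiplicity (f : MvPolynomial (Fin (n + 1)) R) (b : R)
    (a : Fin n → R) {i : Fin n →₀ ℕ}
    (hi : coeffSlice i (shiftTail f a) ≠ 0) :
    polyMult f (Fin.cons b a) ≤
      i.degree + (coeffSlice i (shiftTail f a)).rootMultiplicity b := by
  set g := coeffSlice i (shiftTail f a)
  have hcoeff : MvPolynomial.coeff (Finsupp.cons (g.rootMultiplicity b) i)
      (polyShift f (Fin.cons b a)) ≠ 0 := by
    rw [coeff_cons_polyShift_cons, rootMultiplicity_eq_natTrailingDegree, ← taylor_apply]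
    exact trailingCoeff_nonzero_iff_nonzero.2 ((taylor_eq_zero b _).not.2 hi)
  simpa [Finsupp.degree_cons, add_comm] using polyMult_le_degree hcoeff

theorem leadingCoeff_finSuccEquiv_ne_zero {f : MvPolynomial (Fin (n + 1)) R} (hf : f ≠ 0) :
    (finSuccEquiv R n f).leadingCoeff ≠ 0 :=
  leadingCoeff_ne_zero.2 (EmbeddingLike.map_ne_zero_iff.2 hf)

theorem totalDegree_leadingCoeff_finSuccEquiv_add_le {f : MvPolynomial (Fin (n + 1)) R}
    (hf : f ≠ 0) :
    (finSuccEquiv R n f).leadingCoeff.totalDegree + (finSuccEquiv R n f).natDegree ≤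
      f.totalDegree :=
  totalDegree_coeff_finSuccEquiv_add_le f _ (leadingCoeff_finSuccEquiv_ne_zero hf)

variable [IsDomain R]

theorem sum_polyMult_cons_le {f : MvPolynomial (Fin (n + 1)) R} (hf : f ≠ 0) (U : Finset R)
    (a : Fin n → R) :
    ∑ b ∈ U, polyMult f (Fin.cons b a) ≤
      #U * polyMult (finSuccEquiv R n f).leadingCoeff a + (finSuccEquiv R n f).natDegree := by
  set P := finSuccEquiv R n f
  obtain ⟨i, hi, hne⟩ := exists_degree_eq_polyMult (leadingCoeff_finSuccEquiv_ne_zero hf) a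
  set g := coeffSlice i (shiftTail f a)
  have hg_coeff (k : ℕ) : g.coeff k = MvPolynomial.coeff i (polyShiftAlgHom a (P.coeff k)) := by
    rw [coeff_coeffSlice, coeff_shiftTail]
  have hg_top : g.coeff P.natDegree ≠ 0 := by rwa [hg_coeff, polyShiftAlgHom_apply]
  have hg_deg : g.natDegree ≤ P.natDegree := natDegree_le_iff_coeff_eq_zero.2 fun k hk => by
    rw [hg_coeff, coeff_eq_zero_of_natDegree_lt hk, map_zero, MvPolynomial.coeff_zero]
  have hg : g ≠ 0 := fun h => hg_top (by rw [h, Polynomial.coeff_zero])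
  calc ∑ b ∈ U, polyMult f (Fin.cons b a)
      ≤ ∑ b ∈ U, (polyMult P.leadingCoeff a + g.rootMultiplicity b) :=
        sum_le_sum fun b _ => hi ▸ polyMult_cons_le_add_rootMultiplicity f b a hg
    _ = #U * polyMult P.leadingCoeff a + ∑ b ∈ U, g.rootMultiplicity b := by
        rw [sum_add_distrib, sum_const, smul_eq_mul]
    _ ≤ #U * polyMult P.leadingCoeff a + P.natDegree := by
        gcongr; exact (g.sum_rootMultiplicity_le_natDegree U).trans hg_deg

theorem sum_polyMult_piFinset_succ_le {f : MvPolynomial (Fin (n + 1)) R} (hf : f ≠ 0)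
    (U : Finset R) :
    ∑ x ∈ Fintype.piFinset (fun _ : Fin (n + 1) => U), polyMult f x ≤
      #U * ∑ a ∈ Fintype.piFinset (fun _ : Fin n => U),
          polyMult (finSuccEquiv R n f).leadingCoeff a +
        (finSuccEquiv R n f).natDegree * #U ^ n := by
  rw [Fintype.sum_piFinset_const_succ, sum_comm]
  calc _ ≤ ∑ a ∈ Fintype.piFinset (fun _ : Fin n => U),
          (#U * polyMult (finSuccEquiv R n f).leadingCoeff a + (finSuccEquiv R n f).natDegree) :=
        sum_le_sum fun a _ => sum_polyMult_cons_le hf U a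
    _ = _ := by
      rw [sum_add_distrib, ← mul_sum, sum_const, Fintype.card_piFinset_const, smul_eq_mul,
        mul_comm (#U ^ n)]

theorem sum_polyMult_piFinset_succ_le_totalDegree_mul {f : MvPolynomial (Fin (n + 1)) R}
    (hf : f ≠ 0) (U : Finset R) :
    ∑ x ∈ Fintype.piFinset (fun _ : Fin (n + 1) => U), polyMult f x ≤ f.totalDegree * #U ^ n := by
  have hdeg := totalDegree_leadingCoeff_finSuccEquiv_add_le hf
  induction n with
  | zero =>
    have hstep := sum_polyMult_piFinset_succ_le hf U
    simp only [Finset.sum_eq_zero fun a _ => polyMult_fin_zero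
      (leadingCoeff_finSuccEquiv_ne_zero hf) a, mul_zero, zero_add, pow_zero, mul_one] at hstep ⊢
    omega
  | succ n ih =>
    calc _ ≤ _ := sum_polyMult_piFinset_succ_le hf U
      _ ≤ #U * ((finSuccEquiv R (n + 1) f).leadingCoeff.totalDegree * #U ^ n) +
            (finSuccEquiv R (n + 1) f).natDegree * #U ^ (n + 1) := by
          gcongr
          exact ih (leadingCoeff_finSuccEquiv_ne_zero hf)
            (totalDegree_leadingCoeff_finSuccEquiv_add_le (leadingCoeff_finSuccEquiv_ne_zero hf))
      _ = ((finSuccEquiv R (n + 1) f).leadingCoeff.totalDegree +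
            (finSuccEquiv R (n + 1) f).natDegree) * #U ^ (n + 1) := by ring
      _ ≤ f.totalDegree * #U ^ (n + 1) := by gcongr

end Slicing

/-- Schwartz–Zippel with multiplicities: for a nonzero polynomial `f`
of degree at most `d` and a finite set `U ⊆ F`,
`∑_{a ∈ U^n} mult(f, a) ≤ d · |U|^{n-1}`. -/
theorem schwartz_zippel_with_multiplicities
    {F : Type*} [Field F] {n : ℕ} (f : MvPolynomial (Fin n) F) (hf : f ≠ 0)
    (d : ℕ) (hd : f.totalDegree ≤ d) (U : Finset F) :
    ∑ a ∈ Fintype.piFinset (fun _ : Fin n => U), polyMult f a ≤ d * U.card ^ (n - 1) := by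
  cases n with
  | zero => simp [polyMult_fin_zero hf]
  | succ n =>
    exact (sum_polyMult_piFinset_succ_le_totalDegree_mul hf U).trans (Nat.mul_le_mul_right _ hd)
end

section
/- Let A_1, ..., A_n be matrices of size a_1 × a_2 over a field F whose stacked rows span a space of dimension at least r_1, and for each i ∈ [n] let B_{i,1}, ..., B_{i,m} be b_1 × b_2 matrices whose stacked rows span a space of dimension at least r_2. Then the rows of all Kronecker products A_i ⊗ B_{i,j} (i ∈ [n], j ∈ [m]) span a space of dimension at least r_1 · r_2. -/
open scoped Kronecker

/-- The `crank` of a finite family of matrices with the same number of columns: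
the dimension of the span of all of their rows. -/
noncomputable def crank {ι α β F : Type*} [Field F] (M : ι → Matrix α β F) : ℕ :=
  Module.finrank F (Submodule.span F {r : β → F | ∃ (i : ι) (x : α), r = M i x})

/-- From a finite set whose span has finrank at least `r`, extract `r` linearly
independent elements of the set. -/
lemma exists_linearIndependent_of_le_finrank_span
    {F V : Type*} [Field F] [AddCommGroup V] [Module F V]
    {s : Set V} (hs : s.Finite) {r : ℕ}
    (h : r ≤ Module.finrank F (Submodule.span F s)) :
    ∃ u : Fin r → V, (∀ k, u k ∈ s) ∧ LinearIndependent F u := by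
  obtain ⟨b, hbs, hspan, hind⟩ := exists_linearIndependent F s
  have hbfin : b.Finite := hs.subset hbs
  haveI : Fintype b := hbfin.fintype
  have hcard : Module.finrank F (Submodule.span F s) = b.toFinset.card := by
    rw [← hspan]
    exact finrank_span_set_eq_card hind
  have hr : r ≤ Fintype.card b := by
    rw [Set.toFinset_card] at hcard
    omega
  let e : Fin (Fintype.card b) ≃ b := (Fintype.equivFin b).symm
  refine ⟨fun k => (e (Fin.castLE hr k) : V), fun k => hbs (e (Fin.castLE hr k)).2, ?_⟩
  exact hind.comp (fun k => e (Fin.castLE hr k))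
    (fun x y hxy => by
      have := e.injective hxy
      exact Fin.castLE_injective hr this)

/-- crank bound for tensor (Kronecker) products. -/
theorem crank_kronecker_ge
    {F : Type*} [Field F] {n m a₁ a₂ b₁ b₂ r₁ r₂ : ℕ}
    (A : Fin n → Matrix (Fin a₁) (Fin a₂) F)
    (hA : r₁ ≤ crank A)
    (B : Fin n → Fin m → Matrix (Fin b₁) (Fin b₂) F)
    (hB : ∀ i : Fin n, r₂ ≤ crank (B i)) :
    r₁ * r₂ ≤ crank (fun ij : Fin n × Fin m => A ij.1 ⊗ₖ B ij.1 ij.2) := by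
  classical
  -- the set of rows of the A's
  have hAfin : ({r : Fin a₂ → F | ∃ i x, r = A i x} : Set _).Finite := by
    have : ({r : Fin a₂ → F | ∃ i x, r = A i x} : Set _) =
        Set.range (fun p : Fin n × Fin a₁ => A p.1 p.2) := by
      ext v; constructor
      · rintro ⟨i, x, rfl⟩; exact ⟨(i, x), rfl⟩
      · rintro ⟨⟨i, x⟩, rfl⟩; exact ⟨i, x, rfl⟩
    rw [this]; exact Set.finite_range _
  obtain ⟨u, hu_mem, hu_ind⟩ :=
    exists_linearIndependent_of_le_finrank_span hAfin hA
  choose iA xA hAu using hu_mem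
  -- for each k, extract r₂ independent rows of B (iA k)
  have hBpick : ∀ k : Fin r₁, ∃ w : Fin r₂ → (Fin b₂ → F),
      (∀ l, ∃ j y, w l = B (iA k) j y) ∧ LinearIndependent F w := by
    intro k
    have hBfin : ({r : Fin b₂ → F | ∃ j y, r = B (iA k) j y} : Set _).Finite := by
      have : ({r : Fin b₂ → F | ∃ j y, r = B (iA k) j y} : Set _) =
          Set.range (fun p : Fin m × Fin b₁ => B (iA k) p.1 p.2) := by
        ext v; constructor
        · rintro ⟨j, y, rfl⟩; exact ⟨(j, y), rfl⟩
        · rintro ⟨⟨j, y⟩, rfl⟩; exact ⟨j, y, rfl⟩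
      rw [this]; exact Set.finite_range _
    obtain ⟨w, hw_mem, hw_ind⟩ :=
      exists_linearIndependent_of_le_finrank_span hBfin (hB (iA k))
    exact ⟨w, hw_mem, hw_ind⟩
  choose w hw_mem hw_ind using hBpick
  -- the candidate independent family in the span of Kronecker rows
  set S : Set (Fin a₂ × Fin b₂ → F) :=
    {r | ∃ (ij : Fin n × Fin m) (x : Fin a₁ × Fin b₁),
      r = (A ij.1 ⊗ₖ B ij.1 ij.2) x} with hS
  let v : Fin r₁ × Fin r₂ → (Fin a₂ × Fin b₂ → F) :=
    fun kl => fun cd => u kl.1 cd.1 * w kl.1 kl.2 cd.2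
  have hv_mem : ∀ kl, v kl ∈ S := by
    rintro ⟨k, l⟩
    obtain ⟨j, y, hwy⟩ := hw_mem k l
    refine ⟨(iA k, j), (xA k, y), ?_⟩
    funext cd
    simp only [v, Matrix.kroneckerMap_apply, ← hAu k, ← hwy]
  -- linear independence of v
  have hv_ind : LinearIndependent F v := by
    rw [Fintype.linearIndependent_iff]
    intro g hg
    have key : ∀ (k : Fin r₁) (d : Fin b₂),
        ∑ l : Fin r₂, g (k, l) * w k l d = 0 := by
      intro k d
      have hfun : ∀ c : Fin a₂,
          ∑ k' : Fin r₁, (∑ l : Fin r₂, g (k', l) * w k' l d) * u k' c = 0 := by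
        intro c
        have := congrFun hg (c, d)
        simp only [Finset.sum_apply, Pi.smul_apply, smul_eq_mul, Pi.zero_apply] at this
        rw [← this, Fintype.sum_prod_type]
        apply Finset.sum_congr rfl
        intro k' _
        rw [Finset.sum_mul]
        apply Finset.sum_congr rfl
        intro l _
        simp only [v]; ring
      have := Fintype.linearIndependent_iff.mp hu_ind
        (fun k' => ∑ l : Fin r₂, g (k', l) * w k' l d) ?_ k
      · exact this
      · funext c
        simpa [Finset.sum_apply, mul_comm] using hfun c
    intro kl
    obtain ⟨k, l⟩ := kl
    have := Fintype.linearIndependent_iff.mp (hw_ind k)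
      (fun l => g (k, l)) ?_ l
    · exact this
    · funext d
      simpa [Finset.sum_apply] using key k d
  -- conclude by cardinality
  have hle : r₁ * r₂ ≤ Module.finrank F (Submodule.span F S) := by
    let v' : Fin r₁ × Fin r₂ → ↥(Submodule.span F S) :=
      fun kl => ⟨v kl, Submodule.subset_span (hv_mem kl)⟩
    have hv'_ind : LinearIndependent F v' := by
      have : v = (Submodule.span F S).subtype ∘ v' := rfl
      rw [this] at hv_ind
      exact LinearIndependent.of_comp _ hv_ind
    have := hv'_ind.fintype_card_le_finrank
    simpa [Fintype.card_prod] using this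
  exact hle
end

section
/- Let γ ∈ C be a primitive p^k-th root of unity (p prime, k ≥ 1). Let M be a complex matrix all of whose entries lie in {0, 1, γ, γ^2, ..., γ^{p^k−1}}, and let M̂ be the 0-1 matrix of the same dimensions with M̂_{ij} = 0 if M_{ij} = 0 and M̂_{ij} = 1 otherwise. Then rank_C(M) ≥ rank_{F_p}(M̂), where M̂ is viewed over F_p. -/
/-!
Lift `M` and `M̂` simultaneously to one matrix `P` over `ℤ[X]`, replacing `γ ^ e` by `X ^ e`:
evaluating at `γ` gives `M`, evaluating at `1` and reducing mod `p` gives `M̂`. A nonsingular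
`r × r` minor of `M̂` is the image of the same minor of `P`, whose determinant `d` therefore
satisfies `d(1) ≢ 0 (mod p)`. Since the `p ^ k`-th cyclotomic polynomial divides every integer
polynomial vanishing at `γ` and takes a value divisible by `p` at `1`, we get `d(γ) ≠ 0`, so `M`
also has a nonsingular `r × r` minor.
-/

open Polynomial

namespace Matrix

variable {m n K : Type*} [Fintype m] [Fintype n] [Field K]

theorem exists_linearIndependent_rows_submatrix (A : Matrix m n K) :
    ∃ r : Fin A.rank → m, LinearIndependent K (A.submatrix r id).row := by
  obtain ⟨κ, a, ha, hspan, hli⟩ := exists_linearIndependent' K A.row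
  have : Finite κ := Finite.of_injective a ha
  have : Fintype κ := Fintype.ofFinite κ
  have hcard : Fintype.card κ = A.rank := by
    rw [rank_eq_finrank_span_row, ← hspan, linearIndependent_iff_card_eq_finrank_span.mp hli,
      Set.finrank]
  let e := Fintype.equivFinOfCardEq hcard
  exact ⟨a ∘ e.symm, hli.comp e.symm e.symm.injective⟩

theorem exists_submatrix_det_ne_zero (A : Matrix m n K) :
    ∃ (r : Fin A.rank → m) (c : Fin A.rank → n), (A.submatrix r c).det ≠ 0 := by
  have hcols := Aᵀ.exists_linearIndependent_rows_submatrix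
  rw [rank_transpose] at hcols
  obtain ⟨c, hc⟩ := hcols
  have hrank : (A.submatrix id c).rank = A.rank := by
    rw [← rank_transpose, transpose_submatrix, hc.rank_matrix, Fintype.card_fin]
  have hrows := (A.submatrix id c).exists_linearIndependent_rows_submatrix
  rw [hrank] at hrows
  obtain ⟨r, hr⟩ := hrows
  exact ⟨r, c, ((isUnit_iff_isUnit_det _).mp (linearIndependent_rows_iff_isUnit.mp hr)).ne_zero⟩

theorem rank_map_le_rank_map_of_ker_le {R L : Type*} [CommRing R] [Field L] (φ : R →+* K)
    (ψ : R →+* L) (hker : RingHom.ker φ ≤ RingHom.ker ψ) (P : Matrix m n R) :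
    (P.map ψ).rank ≤ (P.map φ).rank := by
  obtain ⟨r, c, hψ⟩ := (P.map ψ).exists_submatrix_det_ne_zero
  have hφ : ((P.map φ).submatrix r c).det ≠ 0 := by
    rw [submatrix_map, ← RingHom.mapMatrix_apply, ← RingHom.map_det] at hψ ⊢
    exact fun h => hψ (hker h)
  calc (P.map ψ).rank = ((P.map φ).submatrix r c).rank := by
        rw [rank_of_det_ne_zero hφ, Fintype.card_fin]
    _ ≤ (P.map φ).rank := rank_submatrix_le _ _ _

end Matrix

theorem IsPrimitiveRoot.dvd_eval_one_of_aeval_eq_zero {K : Type*} [Field K] [CharZero K]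
    {p : ℕ} [Fact p.Prime] {k : ℕ} {γ : K} (hγ : IsPrimitiveRoot γ (p ^ k)) {q : ℤ[X]}
    (hq : aeval γ q = 0) : (p : ℤ) ∣ q.eval 1 := by
  have hpos : 0 < p ^ k := pow_pos (Fact.out : p.Prime).pos k
  have hcyc : cyclotomic (p ^ k) ℤ ∣ q := by
    rw [cyclotomic_eq_minpoly hγ hpos]
    exact minpoly.isIntegrallyClosed_dvd (hγ.isIntegral hpos) hq
  refine dvd_trans ?_ (eval_dvd hcyc)
  cases k with
  | zero => simp
  | succ k => rw [eval_one_cyclotomic_prime_pow]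

theorem rank_complex_ge_rank_support_general
    {p : ℕ} [Fact p.Prime] {k : ℕ}
    (γ : ℂ) (hγ : IsPrimitiveRoot γ (p ^ k))
    {m₁ m₂ : ℕ} (M : Matrix (Fin m₁) (Fin m₂) ℂ)
    (hM : ∀ i j, M i j = 0 ∨ ∃ e : ℕ, M i j = γ ^ e)
    (Mhat : Matrix (Fin m₁) (Fin m₂) (ZMod p))
    (hMhat : ∀ i j, (M i j = 0 → Mhat i j = 0) ∧ (M i j ≠ 0 → Mhat i j = 1)) :
    Mhat.rank ≤ M.rank := by
  let φ : ℤ[X] →+* ℂ := (aeval γ).toRingHom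
  let ψ : ℤ[X] →+* ZMod p := (Int.castRingHom (ZMod p)).comp (evalRingHom 1)
  have hker : RingHom.ker φ ≤ RingHom.ker ψ := fun q hq =>
    (ZMod.intCast_zmod_eq_zero_iff_dvd _ p).mpr (hγ.dvd_eval_one_of_aeval_eq_zero hq)
  have hlift : ∀ i j, ∃ q : ℤ[X], φ q = M i j ∧ ψ q = Mhat i j := by
    intro i j
    rcases hM i j with hzero | ⟨e, hpow⟩
    · exact ⟨0, by simp [hzero], by simp [(hMhat i j).1 hzero]⟩
    · have hne : M i j ≠ 0 := hpow ▸ pow_ne_zero e (hγ.ne_zero (by simp [NeZero.ne]))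
      exact ⟨X ^ e, by simp [φ, hpow], by simp [ψ, (hMhat i j).2 hne]⟩
  choose P hPφ hPψ using hlift
  have hMφ : M = (Matrix.of P).map φ := by ext i j; exact (hPφ i j).symm
  have hMhatψ : Mhat = (Matrix.of P).map ψ := by ext i j; exact (hPψ i j).symm
  rw [hMφ, hMhatψ]
  exact Matrix.rank_map_le_rank_map_of_ker_le φ ψ hker _

/-- If every entry of a complex matrix `M` is `0` or a power of a
primitive `p^k`-th root of unity `γ`, and `M̂` is its 0-1 support matrix viewed over
`F_p`, then `rank_C(M) ≥ rank_{F_p}(M̂)`. -/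
theorem rank_complex_ge_rank_support
    {p : ℕ} [Fact p.Prime] {k : ℕ} (hk : 1 ≤ k)
    (γ : ℂ) (hγ : IsPrimitiveRoot γ (p ^ k))
    {m₁ m₂ : ℕ} (M : Matrix (Fin m₁) (Fin m₂) ℂ)
    (hM : ∀ i j, M i j = 0 ∨ ∃ e : ℕ, M i j = γ ^ e)
    (Mhat : Matrix (Fin m₁) (Fin m₂) (ZMod p))
    (hMhat : ∀ i j, (M i j = 0 → Mhat i j = 0) ∧ (M i j ≠ 0 → Mhat i j = 1)) :
    Mhat.rank ≤ M.rank :=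
  rank_complex_ge_rank_support_general γ hγ M hM Mhat hMhat
end
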